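/- (Translated sub-configuration rotation numbers agree) Let x : ℤ^d → ℝ be Birkhoff and fix i ∈ ℤ^d. Then for every j ∈ ℤ^d, the one-dimensional sequences n ↦ x_{ni+j} and n ↦ x_{ni} are Birkhoff sequences with the same rotation number; i.e. lim_{n→∞} x_{ni+j}/n = lim_{n→∞} x_{ni}/n. -/

import Mathlib

/-! Comparability of `x` with all its integer shifts `τ_{k,l} x` pins every increment
`p ↦ x (p + k) - x p` into an interval of length `1`. Along the line `n ↦ n • i` this makes
`n ↦ x (n • i) - x 0 + 1` subadditive and bounded below by a linear function, so Fekete's lemma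
gives the rotation number; and `x (n • i + j) - x (n • i)` stays bounded, so the translated
sequence has the same one. -/

open scoped BigOperators

/-- The shift operator `(τ_{k,l} x)_i = x_{i+k} + l`. -/
def tau {d : ℕ} (k : Fin d → ℤ) (l : ℤ) (x : (Fin d → ℤ) → ℝ) : (Fin d → ℤ) → ℝ :=
  fun i => x (i + k) + l

/-- A configuration is Birkhoff if every integer shift is pointwise comparable to it. -/
def IsBirkhoff {d : ℕ} (x : (Fin d → ℤ) → ℝ) : Prop :=
  ∀ (k : Fin d → ℤ) (l : ℤ), tau k l x ≤ x ∨ x ≤ tau k l x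

/-- `x` has rotation vector `ω` : `lim_{n→∞} x_{ni}/n = ⟨ω,i⟩` for all `i`. -/
def HasRotVec {d : ℕ} (x : (Fin d → ℤ) → ℝ) (ω : Fin d → ℝ) : Prop :=
  ∀ i : Fin d → ℤ, Filter.Tendsto (fun n : ℕ => x ((n : ℤ) • i) / n) Filter.atTop
    (nhds (∑ k, ω k * (i k : ℝ)))


/-- A bi-infinite sequence is Birkhoff if all its integer shifts are comparable to it. -/
def BirkhoffSeq (a : ℤ → ℝ) : Prop :=
  ∀ k l : ℤ, (∀ n, a (n + k) + l ≤ a n) ∨ (∀ n, a n ≤ a (n + k) + l)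

open Filter Topology

lemma le_add_one_of_forall_int_comparable {α : Type*} (f : α → ℝ)
    (h : ∀ m : ℤ, (∀ p, f p ≤ m) ∨ (∀ p, (m : ℝ) ≤ f p)) (p q : α) :
    f p ≤ f q + 1 := by
  rcases h (⌊f q⌋ + 1) with h | h
  · have := h p
    push_cast at this
    linarith [Int.floor_le (f q)]
  · have := h q
    push_cast at this
    linarith [Int.lt_floor_add_one (f q)]

section ShiftComparable

variable {G : Type*} [Add G] {x : G → ℝ}

/-- Both `IsBirkhoff x` and `BirkhoffSeq a` unfold to the hypothesis `hx`. -/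
lemma sub_le_sub_add_one_of_shift_comparable
    (hx : ∀ (k : G) (l : ℤ), (∀ p, x (p + k) + l ≤ x p) ∨ (∀ p, x p ≤ x (p + k) + l))
    (k p q : G) : x (p + k) - x p ≤ x (q + k) - x q + 1 := by
  refine le_add_one_of_forall_int_comparable (fun p => x (p + k) - x p) (fun m => ?_) p q
  rcases hx k (-m) with h | h
  · exact .inl fun p => by have := h p; push_cast at this; linarith
  · exact .inr fun p => by have := h p; push_cast at this; linarith

end ShiftComparable

namespace IsBirkhoff

variable {d : ℕ} {x : (Fin d → ℤ) → ℝ}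

lemma sub_le_sub_add_one (hx : IsBirkhoff x) (k p q : Fin d → ℤ) :
    x (p + k) - x p ≤ x (q + k) - x q + 1 :=
  sub_le_sub_add_one_of_shift_comparable hx k p q

lemma abs_sub_le (hx : IsBirkhoff x) (k p : Fin d → ℤ) :
    |x (p + k) - x p| ≤ |x k - x 0| + 1 := by
  have h₁ := hx.sub_le_sub_add_one k p 0
  have h₂ := hx.sub_le_sub_add_one k 0 p
  rw [zero_add] at h₁ h₂
  rw [abs_le]
  constructor <;> linarith [le_abs_self (x k - x 0), neg_abs_le (x k - x 0)]

lemma birkhoffSeq_line (hx : IsBirkhoff x) (i j : Fin d → ℤ) :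
    BirkhoffSeq (fun n : ℤ => x (n • i + j)) := by
  intro k l
  have hline : ∀ n : ℤ, (n + k) • i + j = (n • i + j) + k • i := fun n => by
    rw [add_smul]; abel
  simp only [hline]
  exact hx (k • i) l |>.imp (fun h n => h _) (fun h n => h _)

end IsBirkhoff

namespace BirkhoffSeq

variable {a : ℤ → ℝ}

lemma sub_le_sub_add_one (ha : BirkhoffSeq a) (k m n : ℤ) :
    a (m + k) - a m ≤ a (n + k) - a n + 1 :=
  sub_le_sub_add_one_of_shift_comparable ha k m n

lemma subadditive (ha : BirkhoffSeq a) : Subadditive (fun n : ℕ => a n - a 0 + 1) := by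
  intro m n
  have := ha.sub_le_sub_add_one n m 0
  rw [zero_add] at this
  push_cast
  linarith

lemma le_apply_natCast (ha : BirkhoffSeq a) (n : ℕ) :
    a 0 + n * (a 1 - a 0 - 1) ≤ a n := by
  induction n with
  | zero => simp
  | succ n ih =>
    have := ha.sub_le_sub_add_one 1 0 n
    rw [zero_add] at this
    push_cast
    linarith

theorem exists_tendsto_div (ha : BirkhoffSeq a) :
    ∃ ω : ℝ, Tendsto (fun n : ℕ => a n / n) atTop (𝓝 ω) := by
  have hbdd : BddBelow (Set.range fun n : ℕ => (a n - a 0 + 1) / n) := by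
    refine ⟨min 0 (a 1 - a 0 - 1), ?_⟩
    rintro _ ⟨n, rfl⟩
    rcases Nat.eq_zero_or_pos n with rfl | hn
    · simp
    · rw [le_div_iff₀ (by exact_mod_cast hn)]
      calc min 0 (a 1 - a 0 - 1) * n ≤ (a 1 - a 0 - 1) * n :=
            mul_le_mul_of_nonneg_right (min_le_right _ _) n.cast_nonneg
        _ ≤ a n - a 0 + 1 := by linarith [ha.le_apply_natCast n]
  refine ⟨ha.subadditive.lim, ?_⟩
  have := (ha.subadditive.tendsto_lim hbdd).sub (tendsto_const_div_atTop_nhds_zero_nat (1 - a 0))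
  rw [sub_zero] at this
  exact this.congr fun n => by ring

end BirkhoffSeq

lemma tendsto_div_natCast_of_abs_sub_le {u v : ℕ → ℝ} {C ω : ℝ} (h : ∀ n, |u n - v n| ≤ C)
    (hv : Tendsto (fun n => v n / n) atTop (𝓝 ω)) :
    Tendsto (fun n => u n / n) atTop (𝓝 ω) := by
  have hdiff : Tendsto (fun n : ℕ => (u n - v n) / n) atTop (𝓝 0) := by
    refine squeeze_zero_norm (fun n => ?_) (tendsto_const_div_atTop_nhds_zero_nat C)
    rw [Real.norm_eq_abs, abs_div, Nat.abs_cast]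
    exact div_le_div_of_nonneg_right (h n) n.cast_nonneg
  simpa [sub_div] using hv.add hdiff

theorem stmt18 {d : ℕ} (x : (Fin d → ℤ) → ℝ) (hx : IsBirkhoff x)
    (i j : Fin d → ℤ) :
    BirkhoffSeq (fun n : ℤ => x (n • i + j)) ∧
    BirkhoffSeq (fun n : ℤ => x (n • i)) ∧
    ∃ ω : ℝ,
      Filter.Tendsto (fun n : ℕ => x ((n : ℤ) • i + j) / n) Filter.atTop (nhds ω) ∧
      Filter.Tendsto (fun n : ℕ => x ((n : ℤ) • i) / n) Filter.atTop (nhds ω) := by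
  have hline : BirkhoffSeq (fun n : ℤ => x (n • i)) := by
    simpa using hx.birkhoffSeq_line i 0
  obtain ⟨ω, hω⟩ := hline.exists_tendsto_div
  refine ⟨hx.birkhoffSeq_line i j, hline, ω, ?_, hω⟩
  exact tendsto_div_natCast_of_abs_sub_le (fun n => hx.abs_sub_le j _) hω
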